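/- arXiv:1406.6739 — 2 statements merged into one kernel-verified Lean document; each statement's English description precedes it below -/
import Mathlib

section
/- Let a ∈ ℝ^n and b ∈ ℝ^m. Call a pair (i, j) ∈ {1,…,n} × {1,…,m} 'atypical for (a,b)' if a_i = −b_j. Suppose there exist k pairs (i_1, j_1), …, (i_k, j_k), atypical for (a,b), with i_1,…,i_k pairwise distinct and j_1,…,j_k pairwise distinct. Let (i, j) be any atypical pair for (a,b) and define a' = a + e_i (adding 1 to the i-th coordinate) and b' = b − f_j (subtracting 1 from the j-th coordinate). Then there exist k pairs, atypical for (a', b'), with pairwise distinct first indices and pairwise distinct second indices. -/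
/-- Combinatorial core of invariance of type-A atypicality under odd reflections:
if `(a,b)` admits `k` atypical pairs (`a_i = −b_j`) with pairwise distinct first indices
and pairwise distinct second indices, and `(i,j)` is any atypical pair, then after
replacing `a_i` by `a_i + 1` and `b_j` by `b_j − 1` there still exist `k` such pairs. -/
theorem stmt_8 (n m k : ℕ) (a : Fin n → ℝ) (b : Fin m → ℝ)
    (I : Fin k → Fin n) (J : Fin k → Fin m)
    (hI : Function.Injective I) (hJ : Function.Injective J)
    (hatyp : ∀ r : Fin k, a (I r) = -(b (J r)))
    (i : Fin n) (j : Fin m) (hij : a i = -(b j))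
    (a' : Fin n → ℝ) (ha' : a' = Function.update a i (a i + 1))
    (b' : Fin m → ℝ) (hb' : b' = Function.update b j (b j - 1)) :
    ∃ (I' : Fin k → Fin n) (J' : Fin k → Fin m),
      Function.Injective I' ∧ Function.Injective J' ∧
      ∀ r : Fin k, a' (I' r) = -(b' (J' r)) := by
  subst ha' hb'
  by_cases h1 : ∃ r, I r = i
  · obtain ⟨r1, hr1⟩ := h1
    by_cases h2 : ∃ r, J r = j
    · -- both i and j occur: swap the second components at r1 and r2
      obtain ⟨r2, hr2⟩ := h2
      refine ⟨I, J ∘ Equiv.swap r1 r2, hI, hJ.comp (Equiv.swap r1 r2).injective,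
        fun r => ?_⟩
      by_cases hra : r = r1
      · subst hra
        rw [Function.comp_apply, Equiv.swap_apply_left, hr1, hr2,
          Function.update_self, Function.update_self]
        linarith
      · by_cases hrb : r = r2
        · subst hrb
          have hIr : I r ≠ i := fun h => hra (hI (h.trans hr1.symm))
          have hJr : J r1 ≠ j := fun h => hra (hJ (h.trans hr2.symm)).symm
          rw [Function.comp_apply, Equiv.swap_apply_right,
            Function.update_of_ne hIr, Function.update_of_ne hJr]
          have e1 := hatyp r1
          have e2 := hatyp r
          rw [hr1] at e1; rw [hr2] at e2
          linarith
        · have hIr : I r ≠ i := fun h => hra (hI (h.trans hr1.symm))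
          have hJr : J r ≠ j := fun h => hrb (hJ (h.trans hr2.symm))
          rw [Function.comp_apply, Equiv.swap_apply_of_ne_of_ne hra hrb,
            Function.update_of_ne hIr, Function.update_of_ne hJr]
          exact hatyp r
    · -- i occurs at r1, j does not occur: replace J r1 by j
      push_neg at h2
      refine ⟨I, Function.update J r1 j, hI, ?_, fun r => ?_⟩
      · intro x y hxy
        by_cases hx : x = r1 <;> by_cases hy : y = r1
        · rw [hx, hy]
        · rw [hx, Function.update_self, Function.update_of_ne hy] at hxy
          exact absurd hxy.symm (h2 y)
        · rw [hy, Function.update_self, Function.update_of_ne hx] at hxy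
          exact absurd hxy (h2 x)
        · rw [Function.update_of_ne hx, Function.update_of_ne hy] at hxy
          exact hJ hxy
      · by_cases hr : r = r1
        · subst hr
          rw [hr1, Function.update_self, Function.update_self, Function.update_self]
          linarith
        · have hIr : I r ≠ i := fun h => hr (hI (h.trans hr1.symm))
          rw [Function.update_of_ne hIr, Function.update_of_ne hr,
            Function.update_of_ne (h2 r)]
          exact hatyp r
  · push_neg at h1
    by_cases h2 : ∃ r, J r = j
    · -- j occurs at r2, i does not occur: replace I r2 by i
      obtain ⟨r2, hr2⟩ := h2
      refine ⟨Function.update I r2 i, J, ?_, hJ, fun r => ?_⟩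
      · intro x y hxy
        by_cases hx : x = r2 <;> by_cases hy : y = r2
        · rw [hx, hy]
        · rw [hx, Function.update_self, Function.update_of_ne hy] at hxy
          exact absurd hxy.symm (h1 y)
        · rw [hy, Function.update_self, Function.update_of_ne hx] at hxy
          exact absurd hxy (h1 x)
        · rw [Function.update_of_ne hx, Function.update_of_ne hy] at hxy
          exact hI hxy
      · by_cases hr : r = r2
        · subst hr
          rw [hr2, Function.update_self, Function.update_self, Function.update_self]
          linarith
        · have hJr : J r ≠ j := fun h => hr (hJ (h.trans hr2.symm))
          rw [Function.update_of_ne hr, Function.update_of_ne (h1 r),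
            Function.update_of_ne hJr]
          exact hatyp r
    · -- neither occurs
      push_neg at h2
      refine ⟨I, J, hI, hJ, fun r => ?_⟩
      rw [Function.update_of_ne (h1 r), Function.update_of_ne (h2 r)]
      exact hatyp r
end

section
/- For all nonzero complex numbers a, b such that a² ≠ 1, b² ≠ 1, b⁴ ≠ 1, a² ≠ b², a²b² ≠ 1, ab² ≠ −a^{-1} (i.e. all denominators below are nonzero), the following identity holds: (1/2) · Σ_{s,t ∈ {+1,−1}} s·t·a^{−s}·b^{t} / (1 + a^{−2s} b^{2t}) = (a − a^{−1})(b² − b^{−2}) / [ (a b^{−1} + a^{−1} b)(b + b^{−1})(a b + a^{−1} b^{−1}) ]. -/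
/-!
Writing `u = a⁻ˢ bᵗ`, the summand is `s t u / (1 + u²) = s t (u + u⁻¹)⁻¹`, which is unchanged
under `(s, t) ↦ (-s, -t)`. Hence half the sum is `X⁻¹ - Y⁻¹` with `X = a b⁻¹ + a⁻¹ b` and
`Y = a b + a⁻¹ b⁻¹`, and the identity follows from `Y - X = (a - a⁻¹)(b - b⁻¹)` and
`b² - b⁻² = (b - b⁻¹)(b + b⁻¹)`.
-/

theorem div_one_add_sq_eq_inv_add_inv {K : Type*} [Field K] (x : K) :
    x / (1 + x ^ 2) = (x + x⁻¹)⁻¹ := by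
  rcases eq_or_ne x 0 with rfl | hx
  · simp
  · rw [show x + x⁻¹ = (1 + x ^ 2) / x by field_simp; ring, inv_div]

theorem mul_zpow_mul_zpow_div_one_add {K : Type*} [Field K] (c a b : K) (s t : ℤ) :
    c * a ^ (-s) * b ^ t / (1 + a ^ (-2 * s) * b ^ (2 * t))
      = c * (a ^ (-s) * b ^ t + a ^ s * b ^ (-t))⁻¹ := by
  have hsq : a ^ (-2 * s) * b ^ (2 * t) = (a ^ (-s) * b ^ t) ^ 2 := by
    rw [mul_pow, ← zpow_natCast, ← zpow_natCast, ← zpow_mul, ← zpow_mul]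
    ring_nf
  rw [mul_assoc c, mul_div_assoc, hsq, div_one_add_sq_eq_inv_add_inv, mul_inv,
    ← zpow_neg, ← zpow_neg, neg_neg]

theorem stmt_10_general (a b : ℂ)
    (hd1 : a * b⁻¹ + a⁻¹ * b ≠ 0) (hd2 : b + b⁻¹ ≠ 0) (hd3 : a * b + a⁻¹ * b⁻¹ ≠ 0) :
    (1 / 2 : ℂ) * ∑ s ∈ ({1, -1} : Finset ℤ), ∑ t ∈ ({1, -1} : Finset ℤ),
        (s : ℂ) * (t : ℂ) * a ^ (-s) * b ^ t / (1 + a ^ (-2 * s) * b ^ (2 * t))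
      = (a - a⁻¹) * (b ^ 2 - (b⁻¹) ^ 2) /
          ((a * b⁻¹ + a⁻¹ * b) * (b + b⁻¹) * (a * b + a⁻¹ * b⁻¹)) := by
  have hsum : (1 / 2 : ℂ) * ∑ s ∈ ({1, -1} : Finset ℤ), ∑ t ∈ ({1, -1} : Finset ℤ),
        (s : ℂ) * (t : ℂ) * a ^ (-s) * b ^ t / (1 + a ^ (-2 * s) * b ^ (2 * t))
      = (a * b⁻¹ + a⁻¹ * b)⁻¹ - (a * b + a⁻¹ * b⁻¹)⁻¹ := by
    simp only [mul_zpow_mul_zpow_div_one_add, Finset.sum_pair (show (1 : ℤ) ≠ -1 by decide)]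
    norm_num
    ring
  rw [hsum, inv_sub_inv hd1 hd3,
    div_eq_div_iff (mul_ne_zero hd1 hd3) (mul_ne_zero (mul_ne_zero hd1 hd2) hd3)]
  ring

/-- The Kac–Wakimoto denominator identity for the trivial module over `osp(3|2)` with
respect to the Borel subalgebra `b^odd`, with `x = e^ε = a²`, `y = e^δ = b²`. -/
theorem stmt_10 (a b : ℂ) (ha : a ≠ 0) (hb : b ≠ 0)
    (h1 : a ^ 2 ≠ 1) (h2 : b ^ 2 ≠ 1) (h3 : b ^ 4 ≠ 1) (h4 : a ^ 2 ≠ b ^ 2)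
    (h5 : a ^ 2 * b ^ 2 ≠ 1) (h6 : a * b ^ 2 ≠ -a⁻¹)
    (hden : ∀ s ∈ ({1, -1} : Finset ℤ), ∀ t ∈ ({1, -1} : Finset ℤ),
      1 + a ^ (-2 * s) * b ^ (2 * t) ≠ 0)
    (hd1 : a * b⁻¹ + a⁻¹ * b ≠ 0) (hd2 : b + b⁻¹ ≠ 0) (hd3 : a * b + a⁻¹ * b⁻¹ ≠ 0) :
    (1 / 2 : ℂ) * ∑ s ∈ ({1, -1} : Finset ℤ), ∑ t ∈ ({1, -1} : Finset ℤ),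
        (s : ℂ) * (t : ℂ) * a ^ (-s) * b ^ t / (1 + a ^ (-2 * s) * b ^ (2 * t))
      = (a - a⁻¹) * (b ^ 2 - (b⁻¹) ^ 2) /
          ((a * b⁻¹ + a⁻¹ * b) * (b + b⁻¹) * (a * b + a⁻¹ * b⁻¹)) :=
  stmt_10_general a b hd1 hd2 hd3
end
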